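/- Let A be an m×m real symmetric positive semidefinite matrix with Moore–Penrose inverse A†, let α be a real scalar with ε₀ := ‖A A† − α A²‖ < 1 in spectral norm, and define the Newton–Raphson iterates A₀ = α A, A_{k+1} = 2 A_k − A_k A A_k. Then for every k ≥ 0 one has ‖A† − A_k‖ ≤ ‖A† − A₀‖ · ε₀^(2^k − 1). -/
import Mathlib

open Matrix Filter

noncomputable def specNorm {m : ℕ} (M : Matrix (Fin m) (Fin m) ℝ) : ℝ :=
  ‖Matrix.toEuclideanCLM (𝕜 := ℝ) M‖

def IsMoorePenroseInv {m n : ℕ} (A : Matrix (Fin m) (Fin n) ℝ)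
    (Ad : Matrix (Fin n) (Fin m) ℝ) : Prop :=
  A * Ad * A = A ∧ Ad * A * Ad = Ad ∧ (A * Ad)ᵀ = A * Ad ∧ (Ad * A)ᵀ = Ad * A

lemma specNorm_nonneg {m : ℕ} (M : Matrix (Fin m) (Fin m) ℝ) : 0 ≤ specNorm M :=
  norm_nonneg _

lemma specNorm_mul_le {m : ℕ} (M N : Matrix (Fin m) (Fin m) ℝ) :
    specNorm (M * N) ≤ specNorm M * specNorm N := by
  unfold specNorm
  rw [_root_.map_mul]
  exact norm_mul_le _ _

/-- With `ε₀ := ‖A Ad - α A²‖ < 1`, the Newton–Raphson error satisfies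
`‖Ad - N_k‖ ≤ ‖Ad - N_0‖ ⬝ ε₀ ^ (2 ^ k - 1)`. -/
theorem newton_raphson_error_geometric_bound {m : ℕ}
    (A Ad : Matrix (Fin m) (Fin m) ℝ)
    (hA : A.PosSemidef)
    (hMP : IsMoorePenroseInv A Ad)
    (α : ℝ) (N : ℕ → Matrix (Fin m) (Fin m) ℝ)
    (hN0 : N 0 = α • A)
    (hNrec : ∀ k, N (k + 1) = (2 : ℝ) • N k - N k * A * N k)
    (hinit : specNorm (A * Ad - α • (A * A)) < 1) :
    ∀ k, specNorm (Ad - N k) ≤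
      specNorm (Ad - N 0) * specNorm (A * Ad - α • (A * A)) ^ (2 ^ k - 1) := by
  obtain ⟨hP1, hP2, hP3, hP4⟩ := hMP
  have hAsym : Aᵀ = A := hA.1
  -- A * A * Ad = A
  have hAAAd : A * A * Ad = A := by
    calc A * A * Ad = A * (A * Ad) := by rw [mul_assoc]
      _ = Aᵀ * (A * Ad)ᵀ := by rw [hAsym, hP3]
      _ = (A * Ad * A)ᵀ := (transpose_mul _ _).symm
      _ = A := by rw [hP1, hAsym]
  -- Ad * A * A = A
  have hAdAA : Ad * A * A = A := by
    calc Ad * A * A = (Ad * A)ᵀ * Aᵀ := by rw [hP4, hAsym]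
      _ = (A * (Ad * A))ᵀ := (transpose_mul _ _).symm
      _ = (A * Ad * A)ᵀ := by rw [mul_assoc]
      _ = A := by rw [hP1, hAsym]
  have hL : ∀ k, Ad * A * N k = N k := by
    intro k
    induction k with
    | zero =>
        rw [hN0, mul_smul_comm, mul_assoc, ← mul_assoc, hAdAA]
    | succ k ih =>
        rw [hNrec, mul_sub, mul_smul_comm, ih, ← mul_assoc, ← mul_assoc, ih]
  have hR : ∀ k, N k * A * Ad = N k := by
    intro k
    induction k with
    | zero =>
        rw [hN0, smul_mul_assoc, smul_mul_assoc, mul_assoc, ← mul_assoc, hAAAd]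
    | succ k ih =>
        rw [hNrec, sub_mul, sub_mul, smul_mul_assoc, smul_mul_assoc, ih,
          mul_assoc (N k * A * N k), mul_assoc (N k * A), ← mul_assoc (N k) A Ad, ih]
  have hkey : ∀ k, Ad - N (k + 1) = (Ad - N k) * A * (Ad - N k) := by
    intro k
    rw [hNrec, sub_mul, sub_mul, mul_sub, mul_sub, hP2, hL, hR,
      mul_assoc (N k), ← mul_assoc (N k), two_smul]
    abel
  set ε := specNorm (A * Ad - α • (A * A)) with hε
  have hεnn : 0 ≤ ε := specNorm_nonneg _
  have hF : ∀ k, specNorm (A * (Ad - N k)) ≤ ε ^ (2 ^ k) := by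
    intro k
    induction k with
    | zero =>
        rw [mul_sub, hN0, mul_smul_comm, pow_zero, pow_one]
    | succ k ih =>
        have heq : A * (Ad - N (k + 1)) = (A * (Ad - N k)) * (A * (Ad - N k)) := by
          rw [hkey k, ← mul_assoc, ← mul_assoc, mul_assoc (A * (Ad - N k))]
        rw [heq]
        calc specNorm ((A * (Ad - N k)) * (A * (Ad - N k)))
            ≤ specNorm (A * (Ad - N k)) * specNorm (A * (Ad - N k)) :=
              specNorm_mul_le _ _
          _ ≤ ε ^ 2 ^ k * ε ^ 2 ^ k :=
              mul_le_mul ih ih (specNorm_nonneg _) (pow_nonneg hεnn _)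
          _ = ε ^ 2 ^ (k + 1) := by rw [← pow_add]; congr 1; rw [pow_succ]; omega
  intro k
  induction k with
  | zero => simp
  | succ k ih =>
      have heq : Ad - N (k + 1) = (Ad - N k) * (A * (Ad - N k)) := by
        rw [hkey k, mul_assoc]
      have hexp : 2 ^ k - 1 + 2 ^ k = 2 ^ (k + 1) - 1 := by
        have h1 : 1 ≤ 2 ^ k := Nat.one_le_two_pow
        rw [pow_succ]; omega
      calc specNorm (Ad - N (k + 1))
          ≤ specNorm (Ad - N k) * specNorm (A * (Ad - N k)) := by
            rw [heq]; exact specNorm_mul_le _ _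
        _ ≤ (specNorm (Ad - N 0) * ε ^ (2 ^ k - 1)) * ε ^ 2 ^ k :=
            mul_le_mul ih (hF k) (specNorm_nonneg _)
              (mul_nonneg (specNorm_nonneg _) (pow_nonneg hεnn _))
        _ = specNorm (Ad - N 0) * ε ^ (2 ^ (k + 1) - 1) := by
            rw [mul_assoc, ← pow_add, hexp]
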